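/- arXiv:2601.22286 — 2 statements merged into one kernel-verified Lean document; each statement's English description precedes it below -/
import Mathlib

section
/- Let A ≅ F₂ⁿ be a finite Boolean group with a symmetric nondegenerate F₂-bilinear form β. Consider the real matrix M indexed by nonzero elements a, b of A with entries M[a,b] = β(a,b) ∈ {0,1} ⊂ ℝ. Then M has full rank, i.e., rank |A| − 1. -/
/-!
Replace each entry `β a b` by the sign `(-1) ^ β a b = 1 - 2 β a b`. The rows of the resulting
matrix `C` on all of `A` are the characters `b ↦ (-1) ^ β a b`, pairwise distinct by
nondegeneracy, so `C Cᵀ = |A| • 1` and `C` is invertible. If the `0/1` matrix on the nonzero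
elements kills `v`, then the extension `w` of `v` by `w 0 = 0` makes `C w` constant; since the
column of `C` at `0` is all ones, `C w = C (c • e₀)`, hence `w = c • e₀` and `v = 0`.
-/

open Matrix

theorem neg_one_pow_val_add {R : Type*} [Ring R] (u v : ZMod 2) :
    (-1 : R) ^ (u + v).val = (-1) ^ u.val * (-1) ^ v.val := by
  rw [ZMod.val_add, ← neg_one_pow_eq_pow_mod_two, pow_add]

theorem neg_one_pow_val_eq_one_sub_two_mul {R : Type*} [Ring R] (u : ZMod 2) :
    (-1 : R) ^ u.val = 1 - 2 * u.val := by
  have : u.val < 2 := u.val_lt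
  interval_cases u.val <;> norm_num

theorem sum_neg_one_pow_val_eq_zero {B : Type*} [AddCommGroup B] [Fintype B] (f : B →+ ZMod 2)
    {y : B} (hy : f y = 1) : ∑ b, (-1 : ℝ) ^ (f b).val = 0 := by
  set ψ := (AddChar.zmodChar 2 (neg_one_sq : (-1 : ℝ) ^ 2 = 1)).compAddMonoidHom f
  have hψ : ψ ≠ 1 := fun h => by
    have := DFunLike.congr_fun h y
    norm_num [ψ, hy, AddChar.zmodChar_apply, show (1 : ZMod 2).val = 1 from rfl] at this
  simpa [ψ, AddChar.zmodChar_apply] using AddChar.sum_eq_zero_of_ne_one hψ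

section

variable {A B : Type*} [AddCommGroup A] [Module (ZMod 2) A] [AddCommGroup B] [Module (ZMod 2) B]

def valMatrix (β : A →ₗ[ZMod 2] B →ₗ[ZMod 2] ZMod 2) : Matrix A B ℝ :=
  of fun a b => (β a b).val

def signMatrix (β : A →ₗ[ZMod 2] B →ₗ[ZMod 2] ZMod 2) : Matrix A B ℝ :=
  of fun a b => (-1 : ℝ) ^ (β a b).val

theorem signMatrix_eq (β : A →ₗ[ZMod 2] B →ₗ[ZMod 2] ZMod 2) :
    signMatrix β = of (fun _ _ => 1) - 2 • valMatrix β := by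
  ext a b
  simp [signMatrix, valMatrix, neg_one_pow_val_eq_one_sub_two_mul]

variable [Fintype B]

theorem signMatrix_mul_transpose [DecidableEq A] {β : A →ₗ[ZMod 2] B →ₗ[ZMod 2] ZMod 2}
    (hnd : ∀ x : A, x ≠ 0 → ∃ y : B, β x y = 1) :
    signMatrix β * (signMatrix β)ᵀ = (Fintype.card B : ℝ) • 1 := by
  ext a a'
  have hsum : (signMatrix β * (signMatrix β)ᵀ) a a' = ∑ b, (-1 : ℝ) ^ (β (a + a') b).val := by
    simp [mul_apply, signMatrix, neg_one_pow_val_add]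
  rw [hsum]
  rcases eq_or_ne a a' with rfl | hne
  · simp [ZModModule.add_self]
  · have hadd : a + a' ≠ 0 := by rwa [← ZModModule.sub_eq_add, sub_ne_zero]
    obtain ⟨y, hy⟩ := hnd _ hadd
    rw [Matrix.smul_apply, one_apply_ne hne, smul_zero]
    exact sum_neg_one_pow_val_eq_zero (β (a + a')).toAddMonoidHom hy

theorem isUnit_signMatrix [Fintype A] [DecidableEq A] {β : A →ₗ[ZMod 2] A →ₗ[ZMod 2] ZMod 2}
    (hnd : ∀ x : A, x ≠ 0 → ∃ y, β x y = 1) : IsUnit (signMatrix β) := by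
  have hcard : (Fintype.card A : ℝ) ≠ 0 := Nat.cast_ne_zero.2 Fintype.card_ne_zero
  refine IsUnit.of_mul_eq_one ((Fintype.card A : ℝ)⁻¹ • (signMatrix β)ᵀ) ?_
  rw [mul_smul_comm, signMatrix_mul_transpose hnd, smul_smul, inv_mul_cancel₀ hcard, one_smul]

theorem signMatrix_mulVec_eq_sum {β : A →ₗ[ZMod 2] B →ₗ[ZMod 2] ZMod 2} {v : B → ℝ}
    (hv : valMatrix β *ᵥ v = 0) : signMatrix β *ᵥ v = fun _ => ∑ b, v b := by
  rw [signMatrix_eq, sub_mulVec, smul_mulVec, hv, smul_zero, sub_zero]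
  ext a
  simp [mulVec, dotProduct]

theorem signMatrix_mulVec_single_zero [DecidableEq B] (β : A →ₗ[ZMod 2] B →ₗ[ZMod 2] ZMod 2)
    (c : ℝ) : signMatrix β *ᵥ Pi.single 0 c = fun _ => c := by
  ext a
  simp [mulVec_single, signMatrix]

theorem isUnit_valMatrix_submatrix_ne_zero [Fintype A] [DecidableEq A]
    {β : A →ₗ[ZMod 2] A →ₗ[ZMod 2] ZMod 2} (hnd : ∀ x : A, x ≠ 0 → ∃ y, β x y = 1) :
    IsUnit ((valMatrix β).submatrix
      (Subtype.val : {x : A // x ≠ 0} → A) (Subtype.val : {x : A // x ≠ 0} → A)) := by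
  rw [← mulVec_injective_iff_isUnit, ← coe_mulVecLin, injective_iff_map_eq_zero]
  intro v hv
  set w : A → ℝ := fun a => if h : a = 0 then 0 else v ⟨a, h⟩
  have hw_zero : w 0 = 0 := dif_pos rfl
  have hw_coe (b : {x : A // x ≠ 0}) : w b = v b := dif_neg b.2
  have hw : valMatrix β *ᵥ w = 0 := by
    ext a
    rcases eq_or_ne a 0 with rfl | ha
    · simp [mulVec, dotProduct, valMatrix]
    · rw [mulVec, dotProduct, Fintype.sum_eq_add_sum_subtype_ne _ (0 : A), hw_zero, mul_zero,
        zero_add]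
      simpa [hw_coe, mulVec, dotProduct] using congrFun hv ⟨a, ha⟩
  have hw_single : w = Pi.single 0 (∑ b, w b) := mulVec_injective_iff_isUnit.2
    (isUnit_signMatrix hnd) (by rw [signMatrix_mulVec_eq_sum hw, signMatrix_mulVec_single_zero])
  ext b
  simpa [w, b.2] using congrFun hw_single b

end

theorem bilinear_form_matrix_full_rank_general
    (A : Type*) [AddCommGroup A] [Module (ZMod 2) A] [Fintype A] [DecidableEq A]
    (β : A →ₗ[ZMod 2] A →ₗ[ZMod 2] ZMod 2)
    (hnd : ∀ x : A, x ≠ 0 → ∃ y : A, β x y = 1) :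
    (Matrix.of fun (a b : {x : A // x ≠ 0}) => ((β a.1 b.1).val : ℝ)).rank =
      Fintype.card A - 1 :=
  (rank_of_isUnit _ (isUnit_valMatrix_submatrix_ne_zero hnd)).trans (Set.card_ne_eq 0)

/-- For a finite Boolean group `A ≅ F₂ⁿ` with a symmetric nondegenerate
bilinear form `β`, the real matrix `M` indexed by the nonzero elements of `A` with
entries `M[a,b] = β(a,b) ∈ {0,1} ⊂ ℝ` has full rank `|A| − 1`. -/
theorem bilinear_form_matrix_full_rank
    (A : Type*) [AddCommGroup A] [Module (ZMod 2) A] [Fintype A] [DecidableEq A]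
    (β : A →ₗ[ZMod 2] A →ₗ[ZMod 2] ZMod 2)
    (hsymm : ∀ x y : A, β x y = β y x)
    (hnd : ∀ x : A, x ≠ 0 → ∃ y : A, β x y = 1) :
    (Matrix.of fun (a b : {x : A // x ≠ 0}) => ((β a.1 b.1).val : ℝ)).rank =
      Fintype.card A - 1 :=
  bilinear_form_matrix_full_rank_general A β hnd
end

section
/- Let X be a real-valued random variable with a ≤ X ≤ b almost surely and E[X] = μ. Then for every t ≥ 0, E[e^{tX}] ≤ exp(t²(b−a)²/8 + tμ). (Hoeffding's lemma.) -/
open MeasureTheory ProbabilityTheory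

theorem hoeffding_lemma_general
    {Ω : Type*} [MeasurableSpace Ω] (μ : Measure Ω) [IsProbabilityMeasure μ]
    (X : Ω → ℝ) (hX : Measurable X) (a b m t : ℝ)
    (hab : ∀ᵐ ω ∂μ, a ≤ X ω ∧ X ω ≤ b)
    (hm : (∫ ω, X ω ∂μ) = m) :
    (∫ ω, Real.exp (t * X ω) ∂μ) ≤
      Real.exp (t ^ 2 * (b - a) ^ 2 / 8 + t * m) := by
  have hcentered : mgf (fun ω ↦ X ω - m) μ t ≤ Real.exp (t ^ 2 * (b - a) ^ 2 / 8) := by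
    have h := (hasSubgaussianMGF_of_mem_Icc hX.aemeasurable hab).mgf_le t
    rw [hm] at h
    convert h using 2
    push_cast
    rw [Real.norm_eq_abs, div_pow, sq_abs]
    ring
  calc (∫ ω, Real.exp (t * X ω) ∂μ)
      = mgf (fun ω ↦ X ω - m + m) μ t := by simp only [sub_add_cancel]; rfl
    _ = mgf (fun ω ↦ X ω - m) μ t * Real.exp (t * m) := mgf_add_const m
    _ ≤ Real.exp (t ^ 2 * (b - a) ^ 2 / 8) * Real.exp (t * m) := by gcongr
    _ = Real.exp (t ^ 2 * (b - a) ^ 2 / 8 + t * m) := (Real.exp_add _ _).symm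

/-- Hoeffding's lemma: if `a ≤ X ≤ b` almost surely and `E[X] = m`,
then for every `t ≥ 0`, `E[e^{tX}] ≤ exp(t²(b−a)²/8 + t·m)`. -/
theorem hoeffding_lemma
    {Ω : Type*} [MeasurableSpace Ω] (μ : Measure Ω) [IsProbabilityMeasure μ]
    (X : Ω → ℝ) (hX : Measurable X) (a b m t : ℝ) (ht : 0 ≤ t)
    (hab : ∀ᵐ ω ∂μ, a ≤ X ω ∧ X ω ≤ b)
    (hm : (∫ ω, X ω ∂μ) = m) :
    (∫ ω, Real.exp (t * X ω) ∂μ) ≤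
      Real.exp (t ^ 2 * (b - a) ^ 2 / 8 + t * m) :=
  hoeffding_lemma_general μ X hX a b m t hab hm
end
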